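/- arXiv:1707.06674 — 2 statements merged into one kernel-verified Lean document; each statement's English description precedes it below -/
import Mathlib

section
/- Let V satisfy (H1) and (H3), and let M > 0. If A_n ⊂ ℝ³ is a sequence of measurable sets with |A_n| ≤ M whose characteristic functions χ_{A_n} converge to 0 in L¹_loc(ℝ³), then ∫_{A_n} V(x) dx → 0 as n → ∞. -/
open MeasureTheory Real Filter Metric
open scoped ENNReal Topology

noncomputable section

/-- Three-dimensional Euclidean space. -/
abbrev E3 := EuclideanSpace ℝ (Fin 3)

/-- The divergence of a vector field `φ : ℝ³ → ℝ³`. -/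
def divergence (φ : E3 → E3) (x : E3) : ℝ :=
  ∑ i, fderiv ℝ φ x (EuclideanSpace.single i 1) i

/-- The set of values `∫ u div φ` over admissible test vector fields
`φ ∈ C¹_0(ℝ³;ℝ³)` with `|φ| ≤ 1`. -/
def tvSet (u : E3 → ℝ) : Set ℝ :=
  { r | ∃ φ : E3 → E3, ContDiff ℝ 1 φ ∧ HasCompactSupport φ ∧ (∀ x, ‖φ x‖ ≤ 1) ∧
        r = ∫ x, u x * divergence φ x }

/-- The total variation `∫_{ℝ³} |∇u|`. -/
def totalVariation (u : E3 → ℝ) : ℝ := sSup (tvSet u)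

/-- `u ∈ BV(ℝ³; {0,1})`: an integrable characteristic function of finite total variation. -/
def IsBV01 (u : E3 → ℝ) : Prop :=
  Integrable u ∧ (∀ x, u x = 0 ∨ u x = 1) ∧ BddAbove (tvSet u)

/-- The liquid drop energy `E_V(u)` with external potential `V`. -/
def LDenergy (V : E3 → ℝ) (u : E3 → ℝ) : ℝ :=
  totalVariation u + (∫ x, ∫ y, u x * u y / ‖x - y‖) - ∫ x, V x * u x

/-- The ground-state energy `e_V(M)` at mass `M`. -/
def eV (V : E3 → ℝ) (M : ℝ) : ℝ :=
  sInf { r | ∃ u : E3 → ℝ, IsBV01 u ∧ (∫ x, u x) = M ∧ r = LDenergy V u }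

set_option maxHeartbeats 1000000 in
/-- **Lemma 2.1 (confinement).** If `V` satisfies (H1) and (H3), `M > 0`, and
`A_n` are measurable sets of measure at most `M` whose indicator functions tend
to `0` in `L¹_loc(ℝ³)`, then `∫_{A_n} V → 0`. -/
theorem confinement_lemma (V : E3 → ℝ)
    (hV0 : ∀ x, 0 ≤ V x) (hVloc : LocallyIntegrable V volume)
    (hH3 : Tendsto V (cocompact E3) (𝓝 0))
    (M : ℝ) (hM : 0 < M) (A : ℕ → Set E3)
    (hmeas : ∀ n, MeasurableSet (A n))
    (hvol : ∀ n, volume (A n) ≤ ENNReal.ofReal M)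
    (hloc : ∀ R > 0, Tendsto (fun n => volume (A n ∩ ball (0 : E3) R)) atTop (𝓝 0)) :
    Tendsto (fun n => ∫ x in A n, V x) atTop (𝓝 0) := by
  rw [NormedAddCommGroup.tendsto_nhds_zero]
  intro ε hε
  set δ : ℝ := ε / (2 * (M + 1)) with hδdef
  have hδ : 0 < δ := div_pos hε (by linarith)
  -- find R such that V < δ outside ball 0 R
  obtain ⟨K, hK, hKs⟩ := (hasBasis_cocompact.eventually_iff).mp
    (hH3.eventually (eventually_lt_nhds hδ))
  obtain ⟨R₀, hR₀⟩ := hK.isBounded.subset_ball 0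
  set R : ℝ := max R₀ 1 with hRdef
  have hR : 0 < R := lt_of_lt_of_le one_pos (le_max_right _ _)
  have hKR : K ⊆ ball (0 : E3) R := hR₀.trans (ball_subset_ball (le_max_left _ _))
  have hVsmall : ∀ x : E3, x ∉ ball (0 : E3) R → V x ≤ δ := fun x hx =>
    le_of_lt (hKs (fun hxK => hx (hKR hxK)))
  -- integrability facts
  have hVm : AEStronglyMeasurable V volume := hVloc.aestronglyMeasurable
  have hVball : IntegrableOn V (ball (0 : E3) R) volume :=
    (hVloc.integrableOn_isCompact (isCompact_closedBall (0 : E3) R)).mono_set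
      ball_subset_closedBall
  have hAfin : ∀ n, volume (A n) ≠ ⊤ := fun n =>
    ne_top_of_le_ne_top ENNReal.ofReal_ne_top (hvol n)
  have hint1 : ∀ n, IntegrableOn V (A n ∩ ball (0 : E3) R) volume := fun n =>
    hVball.mono_set Set.inter_subset_right
  have hint2 : ∀ n, IntegrableOn V (A n \ ball (0 : E3) R) volume := fun n => by
    apply Measure.integrableOn_of_bounded (M := δ)
      (ne_top_of_le_ne_top (hAfin n) (measure_mono Set.diff_subset)) hVm
    · filter_upwards [ae_restrict_mem ((hmeas n).diff measurableSet_ball)] with x hx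
      rw [Real.norm_eq_abs, abs_of_nonneg (hV0 x)]
      exact hVsmall x hx.2
  -- the near part tends to zero
  have hnear : Tendsto (fun n => ∫ x in A n ∩ ball (0 : E3) R, V x) atTop (𝓝 0) := by
    have h := hVball.tendsto_setIntegral_nhds_zero (s := fun n => A n)
      (l := atTop) ?_
    · convert h using 2 with n
      rw [Measure.restrict_restrict (hmeas n)]
    · have heq : (⇑(volume.restrict (ball (0:E3) R)) ∘ fun n => A n)
          = fun n => volume (A n ∩ ball (0:E3) R) := by
        funext n
        simp [Function.comp, Measure.restrict_apply (hmeas n)]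
      rw [heq]
      exact hloc R hR
  have hnear' : ∀ᶠ n in atTop, ∫ x in A n ∩ ball (0 : E3) R, V x < ε / 2 := by
    have := (hnear.eventually (eventually_lt_nhds (by linarith : (0:ℝ) < ε / 2)))
    exact this
  filter_upwards [hnear'] with n hn
  have hsplit : ∫ x in A n, V x
      = (∫ x in A n ∩ ball (0 : E3) R, V x) + ∫ x in A n \ ball (0 : E3) R, V x := by
    have hdisj : Disjoint (A n ∩ ball (0:E3) R) (A n \ ball (0:E3) R) :=
      Set.disjoint_sdiff_right.mono_left Set.inter_subset_right
    rw [← setIntegral_union hdisj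
      ((hmeas n).diff measurableSet_ball) (hint1 n) (hint2 n),
      Set.inter_union_diff]
  have hfar : ∫ x in A n \ ball (0 : E3) R, V x ≤ δ * M := by
    have hb := norm_setIntegral_le_of_norm_le_const (μ := volume) (s := A n \ ball (0 : E3) R)
      (C := δ) (f := V) (lt_of_le_of_lt (measure_mono Set.diff_subset)
        (lt_of_le_of_lt (hvol n) ENNReal.ofReal_lt_top))
      (fun x hx => by rw [Real.norm_eq_abs, abs_of_nonneg (hV0 x)]; exact hVsmall x hx.2)
    refine le_trans (le_trans (le_abs_self _) hb) ?_
    apply mul_le_mul_of_nonneg_left _ hδ.le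
    have : volume (A n \ ball (0 : E3) R) ≤ ENNReal.ofReal M :=
      le_trans (measure_mono Set.diff_subset) (hvol n)
    calc (volume (A n \ ball (0 : E3) R)).toReal
        ≤ (ENNReal.ofReal M).toReal := ENNReal.toReal_mono ENNReal.ofReal_ne_top this
      _ = M := ENNReal.toReal_ofReal hM.le
  have hδM : δ * M < ε / 2 := by
    rw [hδdef, div_mul_eq_mul_div, div_lt_iff₀ (by linarith : (0:ℝ) < 2 * (M + 1))]
    nlinarith
  have hnonneg : 0 ≤ ∫ x in A n, V x := setIntegral_nonneg (hmeas n) (fun x _ => hV0 x)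
  rw [Real.norm_eq_abs, abs_of_nonneg hnonneg, hsplit]
  linarith
end
end

section
/- Let V ≥ 0 be locally integrable on ℝ³ and satisfy (H2), i.e. lim_{t→∞} t·inf_{|x|=t} V(x) = ∞. Let Ω ⊂ ℝ³ be a bounded measurable set with |Ω| > 0 and let b ∈ ℝ³ be a unit vector. Then t·∫_Ω V(x + tb) dx → ∞ as t → ∞. -/
open MeasureTheory Real Filter Metric
open scoped ENNReal Topology

noncomputable section

/-- If `V ≥ 0` is locally integrable and satisfies (H2), i.e.
`t · inf_{|x|=t} V(x) → ∞` as `t → ∞`, and `Ω` is a bounded measurable set of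
positive measure, then `t · ∫_Ω V(x + tb) dx → ∞` for any unit vector `b`. -/
theorem confining_term_blows_up (V : E3 → ℝ)
    (hV0 : ∀ x, 0 ≤ V x) (hVloc : LocallyIntegrable V volume)
    (hH2 : Tendsto (fun t : ℝ => t * sInf (V '' sphere (0 : E3) t)) atTop atTop)
    (Ω : Set E3) (hmeas : MeasurableSet Ω) (hbdd : Bornology.IsBounded Ω)
    (hpos : 0 < volume Ω) (b : E3) (hb : ‖b‖ = 1) :
    Tendsto (fun t : ℝ => t * ∫ x in Ω, V (x + t • b)) atTop atTop := by
  -- bound Ω in a ball of radius R > 0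
  obtain ⟨R₀, hR₀⟩ := hbdd.subset_closedBall 0
  set R : ℝ := max R₀ 1 with hRdef
  have hR1 : (1:ℝ) ≤ R := le_max_right _ _
  have hRpos : 0 < R := lt_of_lt_of_le one_pos hR1
  have hR : ∀ x ∈ Ω, ‖x‖ ≤ R := by
    intro x hx
    have := hR₀ hx
    simp only [mem_closedBall, dist_zero_right] at this
    exact this.trans (le_max_left _ _)
  -- measure of Ω
  have hμfin : volume Ω < ⊤ := hbdd.measure_lt_top
  set μΩ : ℝ := (volume Ω).toReal with hμdef
  have hμpos : 0 < μΩ := ENNReal.toReal_pos hpos.ne' hμfin.ne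
  -- integrability of translates
  have hint : ∀ t : ℝ, IntegrableOn (fun x => V (x + t • b)) Ω volume := by
    intro t
    have hW : LocallyIntegrable (fun x => V (x + t • b)) volume := by
      have h2 := (locallyIntegrable_map_homeomorph (Homeomorph.addRight (t • b))
        (f := V) (μ := volume)).mp
      have h3 : Measure.map (⇑(Homeomorph.addRight (t • b))) volume = volume := by
        simpa using map_add_right_eq_self (volume : Measure E3) (t • b)
      rw [h3] at h2
      exact h2 hVloc
    exact (hW.integrableOn_isCompact hbdd.isCompact_closure).mono_set subset_closure
  rw [Filter.tendsto_atTop]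
  intro K
  set C : ℝ := max 1 (2 * K / μΩ) with hCdef
  have hC1 : (1:ℝ) ≤ C := le_max_left _ _
  have hC0 : (0:ℝ) ≤ C := le_trans zero_le_one hC1
  have hCK : K ≤ C * μΩ / 2 := by
    have : 2 * K / μΩ ≤ C := le_max_right _ _
    have h2 : 2 * K ≤ C * μΩ := by
      calc 2 * K = (2 * K / μΩ) * μΩ := by field_simp
        _ ≤ C * μΩ := by nlinarith
    linarith
  obtain ⟨T, hT⟩ := (hH2.eventually_ge_atTop C).exists_forall_of_atTop
  filter_upwards [eventually_ge_atTop (max (T + R) (2 * R))] with t ht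
  have htTR : T + R ≤ t := le_trans (le_max_left _ _) ht
  have ht2R : 2 * R ≤ t := le_trans (le_max_right _ _) ht
  have htpos : 0 < t := lt_of_lt_of_le (by linarith) ht2R
  -- pointwise lower bound
  have hlow : ∀ x ∈ Ω, C / (t + R) ≤ V (x + t • b) := by
    intro x hx
    set y := x + t • b with hy
    have hxR := hR x hx
    have hnb : ‖t • b‖ = t := by
      rw [norm_smul, hb, mul_one, Real.norm_eq_abs, abs_of_pos htpos]
    have hylb : t - R ≤ ‖y‖ := by
      have := norm_sub_norm_le (t • b) (-x)
      simp only [norm_neg, sub_neg_eq_add] at this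
      rw [hnb] at this
      have : t - ‖x‖ ≤ ‖t • b + x‖ := this
      rw [add_comm] at this
      linarith
    have hyub : ‖y‖ ≤ t + R := by
      calc ‖y‖ ≤ ‖x‖ + ‖t • b‖ := norm_add_le _ _
        _ ≤ R + t := by rw [hnb]; linarith
        _ = t + R := by ring
    have hypos : 0 < ‖y‖ := lt_of_lt_of_le (by linarith) hylb
    have hyT : T ≤ ‖y‖ := le_trans (by linarith) hylb
    -- sInf bound
    have hmem : y ∈ sphere (0 : E3) ‖y‖ := by simp [mem_sphere, dist_zero_right]
    have hbdd' : BddBelow (V '' sphere (0 : E3) ‖y‖) := by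
      refine ⟨0, ?_⟩
      rintro v ⟨z, _, rfl⟩
      exact hV0 z
    have hinf : sInf (V '' sphere (0 : E3) ‖y‖) ≤ V y :=
      csInf_le hbdd' ⟨y, hmem, rfl⟩
    have hCy : C ≤ ‖y‖ * sInf (V '' sphere (0 : E3) ‖y‖) := hT _ hyT
    have hVy : C / ‖y‖ ≤ V y := by
      rw [div_le_iff₀ hypos]
      calc C ≤ ‖y‖ * sInf (V '' sphere (0 : E3) ‖y‖) := hCy
        _ ≤ ‖y‖ * V y := by nlinarith
        _ = V y * ‖y‖ := mul_comm _ _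
    calc C / (t + R) ≤ C / ‖y‖ := div_le_div_of_nonneg_left hC0 hypos hyub
      _ ≤ V y := hVy
  -- integral bound
  have hIB : C / (t + R) * μΩ ≤ ∫ x in Ω, V (x + t • b) :=
    setIntegral_ge_of_const_le_real hmeas hμfin.ne hlow (hint t)
  have htR : 0 < t + R := by linarith
  have hfrac : (1:ℝ)/2 ≤ t / (t + R) := by
    rw [div_le_div_iff₀ two_pos htR]
    linarith
  calc K ≤ C * μΩ / 2 := hCK
    _ = C * μΩ * (1/2) := by ring
    _ ≤ C * μΩ * (t / (t + R)) := by
        apply mul_le_mul_of_nonneg_left hfrac (by positivity)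
    _ = t * (C / (t + R) * μΩ) := by field_simp
    _ ≤ t * ∫ x in Ω, V (x + t • b) := by
        apply mul_le_mul_of_nonneg_left hIB (le_of_lt htpos)
end
end
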